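/- arXiv:1503.05186 — 2 statements merged into one kernel-verified Lean document; each statement's English description precedes it below -/
import Mathlib

section
/- Consider a process on partitions of a finite set V of size n ≥ m, starting from the partition into singletons, in which at each step exactly two parts are merged into one. If the process reaches a partition containing a part of size at least m (with 1 ≤ m ≤ n), then at some step there was a part of size s with m ≤ s ≤ 2m. -/
/-!
Track the largest part size `s t` of `P t`. It starts at `1`, and since a merge creates a
part of size `|a| + |b|`, it at most doubles at each step. At the first time `s t ≥ m` we
had `s (t - 1) < m`, hence `s t < 2 m`, and a largest part of `P t` is the required one.
-/

open Finset

theorem Nat.exists_le_le_two_mul_of_le_two_mul_succ {m T : ℕ} (s : ℕ → ℕ)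
    (h0 : s 0 ≤ 2 * m) (hstep : ∀ t < T, s (t + 1) ≤ 2 * s t)
    (hbig : ∃ t ≤ T, m ≤ s t) :
    ∃ t ≤ T, m ≤ s t ∧ s t ≤ 2 * m := by
  classical
  let t₀ := Nat.find hbig
  obtain ⟨ht₀T, hm⟩ : t₀ ≤ T ∧ m ≤ s t₀ := Nat.find_spec hbig
  refine ⟨t₀, ht₀T, hm, ?_⟩
  by_cases ht₀ : t₀ = 0
  · simpa [ht₀] using h0
  · obtain ⟨t, ht₀⟩ := Nat.exists_eq_add_one_of_ne_zero ht₀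
    have hsmall : s t < m := by
      by_contra! h
      exact Nat.find_min hbig (show t < t₀ by omega) ⟨by omega, h⟩
    have := hstep t (by omega)
    rw [ht₀]
    omega

section Merge

variable {α : Type*} [DecidableEq α]

theorem sup_card_insert_union_erase_erase_le {Q : Finset (Finset α)} {a b : Finset α}
    (ha : a ∈ Q) (hb : b ∈ Q) :
    (insert (a ∪ b) ((Q.erase a).erase b)).sup card ≤ 2 * Q.sup card := by
  refine Finset.sup_le fun C hC => ?_
  rcases mem_insert.mp hC with rfl | hC
  · calc (a ∪ b).card ≤ a.card + b.card := card_union_le a b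
      _ ≤ 2 * Q.sup card := by
        have := le_sup (f := card) ha
        have := le_sup (f := card) hb
        omega
  · have := le_sup (f := card) (mem_of_mem_erase (mem_of_mem_erase hC))
    omega

theorem sup_card_image_singleton_le_one (s : Finset α) :
    (s.image fun v => ({v} : Finset α)).sup card ≤ 1 :=
  Finset.sup_le fun C hC => by
    obtain ⟨v, -, rfl⟩ := mem_image.mp hC
    simp

end Merge

theorem aizenman_lebowitz_partitions_general (n m T : ℕ) (hm : 1 ≤ m)
    (P : ℕ → Finset (Finset (Fin n)))
    (h0 : P 0 = Finset.univ.image fun v => {v})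
    (hstep : ∀ t < T, ∃ a ∈ P t, ∃ b ∈ P t, a ≠ b ∧
      P (t + 1) = insert (a ∪ b) (((P t).erase a).erase b))
    (hbig : ∃ t ≤ T, ∃ C ∈ P t, m ≤ C.card) :
    ∃ t ≤ T, ∃ C ∈ P t, m ≤ C.card ∧ C.card ≤ 2 * m := by
  let s t := (P t).sup card
  have hs0 : s 0 ≤ 2 * m := by
    have := sup_card_image_singleton_le_one (univ : Finset (Fin n))
    simp only [s, h0]
    omega
  have hs_step : ∀ t < T, s (t + 1) ≤ 2 * s t := fun t ht => by
    obtain ⟨a, ha, b, hb, -, hP⟩ := hstep t ht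
    simpa only [s, hP] using sup_card_insert_union_erase_erase_le ha hb
  have hs_big : ∃ t ≤ T, m ≤ s t := by
    obtain ⟨t, ht, C, hC, hCm⟩ := hbig
    exact ⟨t, ht, hCm.trans (le_sup hC)⟩
  obtain ⟨t, ht, hmt, htm⟩ := Nat.exists_le_le_two_mul_of_le_two_mul_succ s hs0 hs_step hs_big
  have hne : (P t).Nonempty := nonempty_of_ne_empty fun h => by simp [s, h] at hmt; omega
  obtain ⟨C, hC, hCs⟩ := exists_mem_eq_sup (P t) hne card
  exact ⟨t, ht, C, hC, hCs ▸ hmt, hCs ▸ htm⟩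

theorem aizenman_lebowitz_partitions (n m T : ℕ) (hm : 1 ≤ m) (hmn : m ≤ n)
    (P : ℕ → Finset (Finset (Fin n)))
    (h0 : P 0 = Finset.univ.image fun v => {v})
    (hstep : ∀ t < T, ∃ a ∈ P t, ∃ b ∈ P t, a ≠ b ∧
      P (t + 1) = insert (a ∪ b) (((P t).erase a).erase b))
    (hbig : ∃ t ≤ T, ∃ C ∈ P t, m ≤ C.card) :
    ∃ t ≤ T, ∃ C ∈ P t, m ≤ C.card ∧ C.card ≤ 2 * m :=
  aizenman_lebowitz_partitions_general n m T hm P h0 hstep hbig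
end

section
/- Let G = (V, E₁, E₂) be a double graph on vertex set [n]. If the jigsaw percolation process on G percolates (terminates with a single cluster containing all vertices), and n ≥ 2m for some m ≥ 1, then there exists a set A ⊆ [n] with m ≤ |A| ≤ 2m such that both induced graphs ([A], E₁ restricted to A) and ([A], E₂ restricted to A) are connected. -/
/-- One step of the jigsaw percolation process: two distinct clusters `a, b` of the
partition `P` merge, provided some edge of each colour meets both of them. -/
def JigsawMerge {n : ℕ} (E1 E2 : Set (Sym2 (Fin n)))
    (P Q : Finset (Finset (Fin n))) : Prop :=
  ∃ a ∈ P, ∃ b ∈ P, a ≠ b ∧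
    (∃ e1 ∈ E1, (∃ x ∈ a, x ∈ e1) ∧ (∃ y ∈ b, y ∈ e1)) ∧
    (∃ e2 ∈ E2, (∃ x ∈ a, x ∈ e2) ∧ (∃ y ∈ b, y ∈ e2)) ∧
    Q = insert (a ∪ b) ((P.erase a).erase b)

/-- The double graph `([n], E1, E2)` percolates: starting from the partition into
singletons, some sequence of jigsaw merges ends with the single cluster `[n]`. -/
def JigsawPercolates (n : ℕ) (E1 E2 : Set (Sym2 (Fin n))) : Prop :=
  ∃ (T : ℕ) (P : ℕ → Finset (Finset (Fin n))),
    P 0 = Finset.univ.image (fun v => {v}) ∧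
    (∀ t < T, JigsawMerge E1 E2 (P t) (P (t + 1))) ∧
    P T = {Finset.univ}

/-!
A cluster formed by the process is connected in both colours: two clusters connected in a colour
stay connected after the merge, since the edge of that colour meeting both either joins them or
meets them in a common vertex. Merging two clusters at a time, a cluster of size at least `m`
first appears as the union of two clusters of size less than `m`, hence has size less than
`2 * m`; and one does appear, because the final cluster `[n]` has size `n ≥ m`.
-/

open SimpleGraph

lemma SimpleGraph.connected_fromEdgeSet_induce_union {V : Type*} {E : Set (Sym2 V)}
    {s t : Set V} (hs : ((fromEdgeSet E).induce s).Connected)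
    (ht : ((fromEdgeSet E).induce t).Connected)
    (hE : ∃ e ∈ E, (∃ x ∈ s, x ∈ e) ∧ (∃ y ∈ t, y ∈ e)) :
    ((fromEdgeSet E).induce (s ∪ t)).Connected := by
  obtain ⟨e, he, ⟨x, hxs, hxe⟩, ⟨y, hyt, hye⟩⟩ := hE
  by_cases hxy : x = y
  · subst hxy
    exact induce_union_connected hs.preconnected ht.preconnected ⟨x, hxs, hyt⟩
  · obtain rfl : e = s(x, y) := (Sym2.mem_and_mem_iff hxy).mp ⟨hxe, hye⟩
    exact connected_induce_union hs.preconnected ht.preconnected hxs hyt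
      (fromEdgeSet_adj E |>.mpr ⟨he, hxy⟩)

section DoublyConnected

variable {V : Type*} {E1 E2 : Set (Sym2 V)}

def IsDoublyConnected (E1 E2 : Set (Sym2 V)) (A : Set V) : Prop :=
  ((fromEdgeSet E1).induce A).Connected ∧ ((fromEdgeSet E2).induce A).Connected

lemma isDoublyConnected_singleton (v : V) : IsDoublyConnected E1 E2 {v} :=
  ⟨Connected.of_subsingleton, Connected.of_subsingleton⟩

lemma IsDoublyConnected.union {s t : Set V} (hs : IsDoublyConnected E1 E2 s)
    (ht : IsDoublyConnected E1 E2 t)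
    (hE1 : ∃ e ∈ E1, (∃ x ∈ s, x ∈ e) ∧ (∃ y ∈ t, y ∈ e))
    (hE2 : ∃ e ∈ E2, (∃ x ∈ s, x ∈ e) ∧ (∃ y ∈ t, y ∈ e)) :
    IsDoublyConnected E1 E2 (s ∪ t) :=
  ⟨connected_fromEdgeSet_induce_union hs.1 ht.1 hE1,
    connected_fromEdgeSet_induce_union hs.2 ht.2 hE2⟩

end DoublyConnected

lemma exists_mem_le_card_le_two_mul {α : Type*} [DecidableEq α] {P : ℕ → Finset (Finset α)} {m T : ℕ}
    (h0 : ∀ c ∈ P 0, c.card ≤ 2 * m)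
    (hstep : ∀ t < T, ∀ c ∈ P (t + 1), ∃ a ∈ P t, ∃ b ∈ P t, c ⊆ a ∪ b)
    (hT : ∃ c ∈ P T, m ≤ c.card) :
    ∃ t ≤ T, ∃ c ∈ P t, m ≤ c.card ∧ c.card ≤ 2 * m := by
  induction T with
  | zero =>
    obtain ⟨c, hc, hmc⟩ := hT
    exact ⟨0, le_rfl, c, hc, hmc, h0 c hc⟩
  | succ T ih =>
    by_cases hbig : ∃ c ∈ P T, m ≤ c.card
    · obtain ⟨t, ht, hc⟩ := ih (fun t ht => hstep t (by omega)) hbig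
      exact ⟨t, by omega, hc⟩
    · simp only [not_exists, not_and, not_le] at hbig
      obtain ⟨c, hc, hmc⟩ := hT
      obtain ⟨a, ha, b, hb, hcab⟩ := hstep T (by omega) c hc
      have hab := (Finset.card_le_card hcab).trans (Finset.card_union_le a b)
      exact ⟨T + 1, le_rfl, c, hc, hmc, by linarith [hbig a ha, hbig b hb]⟩

namespace JigsawMerge

variable {n : ℕ} {E1 E2 : Set (Sym2 (Fin n))} {P Q : Finset (Finset (Fin n))}

lemma exists_subset_union (h : JigsawMerge E1 E2 P Q) :
    ∀ c ∈ Q, ∃ a ∈ P, ∃ b ∈ P, c ⊆ a ∪ b := by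
  obtain ⟨a, ha, b, hb, -, -, -, rfl⟩ := h
  intro c hc
  rcases Finset.mem_insert.mp hc with rfl | hc
  · exact ⟨a, ha, b, hb, subset_rfl⟩
  · have hcP := Finset.mem_of_mem_erase (Finset.mem_of_mem_erase hc)
    exact ⟨c, hcP, c, hcP, Finset.subset_union_left⟩

lemma isDoublyConnected (h : JigsawMerge E1 E2 P Q)
    (hP : ∀ c ∈ P, IsDoublyConnected E1 E2 (c : Set (Fin n))) :
    ∀ c ∈ Q, IsDoublyConnected E1 E2 (c : Set (Fin n)) := by
  obtain ⟨a, ha, b, hb, -, hE1, hE2, rfl⟩ := h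
  intro c hc
  rcases Finset.mem_insert.mp hc with rfl | hc
  · rw [Finset.coe_union]
    exact (hP a ha).union (hP b hb) hE1 hE2
  · exact hP c (Finset.mem_of_mem_erase (Finset.mem_of_mem_erase hc))

end JigsawMerge

lemma isDoublyConnected_of_jigsawMerge_run {n T : ℕ} {E1 E2 : Set (Sym2 (Fin n))}
    {P : ℕ → Finset (Finset (Fin n))} (h0 : P 0 = Finset.univ.image (fun v => {v}))
    (hstep : ∀ t < T, JigsawMerge E1 E2 (P t) (P (t + 1))) :
    ∀ t ≤ T, ∀ c ∈ P t, IsDoublyConnected E1 E2 (c : Set (Fin n)) := by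
  intro t ht
  induction t with
  | zero =>
    simp only [h0, Finset.mem_image, Finset.mem_univ, true_and, forall_exists_index,
      forall_apply_eq_imp_iff, Finset.coe_singleton]
    exact isDoublyConnected_singleton
  | succ t ih => exact (hstep t ht).isDoublyConnected (ih (by omega))

theorem percolates_implies_doubly_connected_set (n m : ℕ) (hm : 1 ≤ m)
    (hn : 2 * m ≤ n) (E1 E2 : Set (Sym2 (Fin n)))
    (h : JigsawPercolates n E1 E2) :
    ∃ A : Finset (Fin n), m ≤ A.card ∧ A.card ≤ 2 * m ∧
      ((SimpleGraph.fromEdgeSet E1).induce (A : Set (Fin n))).Connected ∧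
      ((SimpleGraph.fromEdgeSet E2).induce (A : Set (Fin n))).Connected := by
  obtain ⟨T, P, hP0, hstep, hPT⟩ := h
  have hsingletons : ∀ c ∈ P 0, c.card ≤ 2 * m := by
    simp only [hP0, Finset.mem_image, Finset.mem_univ, true_and, forall_exists_index,
      forall_apply_eq_imp_iff, Finset.card_singleton]
    omega
  have hfinal : ∃ c ∈ P T, m ≤ c.card :=
    ⟨Finset.univ, by simp [hPT], by simp only [Finset.card_univ, Fintype.card_fin]; omega⟩
  obtain ⟨t, ht, A, hA, hmA, hA2m⟩ := exists_mem_le_card_le_two_mul hsingletons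
    (fun t ht => (hstep t ht).exists_subset_union) hfinal
  exact ⟨A, hmA, hA2m, isDoublyConnected_of_jigsawMerge_run hP0 hstep t ht A hA⟩
end
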